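/- arXiv:1402.4148 — 3 statements merged into one kernel-verified Lean document; each statement's English description precedes it below -/
import Mathlib

section
/- Let A be an infinite matrix over a countable set G with finite S_{0,1}-measure and bounded entries, and let w be a weight with w(i,j) ≥ 1 and sup_{i,j} |a_{ij}| w(i,j) < ∞. Then lim_{q→0⁺} ‖A‖_{S_{q,w}}^q = ‖A‖_{S_{0,1}}, where ‖A‖_{S_{q,w}} = max( sup_i (Σ_j |a_{ij}|^q w(i,j)^q)^{1/q}, sup_j (Σ_i |a_{ij}|^q w(i,j)^q)^{1/q} ). -/
/-!
For `q > 0` a row sum `∑ⱼ |aᵢⱼ|^q wᵢⱼ^q` is the finite sum of `(|aᵢⱼ| wᵢⱼ)^q` over the nonzero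
entries of the row, and each term tends to `1` as `q → 0⁺`. If `N` is the largest number of nonzero
entries in a row, every row sum is at most `N · max(M, 1)^q`, while a row with exactly `N` nonzero
entries bounds the supremum from below; both bounds tend to `N`. Columns are the rows of the
transpose, and the two suprema combine through `max`.
-/

open Filter

/-- The sparsity measure ‖A‖_{S_{0,1}} (valued in ℕ∞). -/
noncomputable def S01 {G : Type*} (A : G → G → ℂ) : ℕ∞ :=
  max (⨆ i : G, {j : G | A i j ≠ 0}.encard) (⨆ j : G, {i : G | A i j ≠ 0}.encard)

/-- The q-th power of the Gröchenig–Schur S_{q,w} quasi-norm. -/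
noncomputable def SqwPow {G : Type*} (q : ℝ) (w : G → G → ℝ) (A : G → G → ℂ) : ℝ :=
  max (⨆ i : G, ∑' j : G, ‖A i j‖ ^ q * w i j ^ q)
      (⨆ j : G, ∑' i : G, ‖A i j‖ ^ q * w i j ^ q)

open Topology Function

lemma ENat.toNat_max {a b : ℕ∞} (ha : a ≠ ⊤) (hb : b ≠ ⊤) :
    (max a b).toNat = max a.toNat b.toNat := by
  lift a to ℕ using ha
  lift b to ℕ using hb
  rcases le_total a b with h | h <;> simp [h]

section

variable {α ι : Type*}

lemma tsum_rpow_eq_sum_toFinset {f : α → ℝ} (hf : (support f).Finite) {q : ℝ} (hq : 0 < q) :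
    ∑' j, f j ^ q = ∑ j ∈ hf.toFinset, f j ^ q :=
  tsum_eq_sum fun j hj => by
    rw [hf.mem_toFinset, notMem_support] at hj
    rw [hj, Real.zero_rpow hq.ne']

lemma tsum_rpow_le_mul_rpow {f : α → ℝ} (hf0 : 0 ≤ f) {C : ℝ} (hC : 0 ≤ C) (hfC : ∀ j, f j ≤ C)
    {N : ℕ} (hN : (support f).encard ≤ N) {q : ℝ} (hq : 0 < q) :
    ∑' j, f j ^ q ≤ N * C ^ q := by
  have hf : (support f).Finite := Set.finite_of_encard_le_coe hN
  have hcard : hf.toFinset.card ≤ N := by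
    rwa [hf.encard_eq_coe_toFinset_card, Nat.cast_le] at hN
  rw [tsum_rpow_eq_sum_toFinset hf hq]
  calc ∑ j ∈ hf.toFinset, f j ^ q ≤ hf.toFinset.card • C ^ q :=
        Finset.sum_le_card_nsmul _ _ _ fun j _ => Real.rpow_le_rpow (hf0 j) (hfC j) hq.le
    _ ≤ N * C ^ q := by rw [nsmul_eq_mul]; gcongr

lemma tendsto_tsum_rpow_nhdsGT_zero {f : α → ℝ} (hf : (support f).Finite) :
    Tendsto (fun q : ℝ => ∑' j, f j ^ q) (𝓝[>] 0) (𝓝 ((support f).ncard : ℝ)) := by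
  have hsum : Tendsto (fun q : ℝ => ∑ j ∈ hf.toFinset, f j ^ q) (𝓝[>] 0)
      (𝓝 (∑ _j ∈ hf.toFinset, (1 : ℝ))) := by
    refine tendsto_finsetSum _ fun j hj => ?_
    simpa using (Real.continuousAt_const_rpow (b := 0) (hf.mem_toFinset.mp hj)).tendsto.mono_left
      nhdsWithin_le_nhds
  rw [Finset.sum_const, nsmul_one, ← Set.ncard_eq_toFinset_card _ hf] at hsum
  exact hsum.congr' (eventually_nhdsWithin_of_forall fun q hq =>
    (tsum_rpow_eq_sum_toFinset hf hq).symm)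

lemma tendsto_const_mul_rpow_nhdsGT_zero (N : ℝ) {C : ℝ} (hC : C ≠ 0) :
    Tendsto (fun q : ℝ => N * C ^ q) (𝓝[>] 0) (𝓝 N) := by
  simpa using (tendsto_const_nhds.mul (Real.continuousAt_const_rpow (b := 0) hC).tendsto).mono_left
    nhdsWithin_le_nhds

theorem tendsto_iSup_tsum_rpow_nhdsGT_zero {f : ι → α → ℝ} (hf0 : ∀ i, 0 ≤ f i) {C : ℝ}
    (hfC : ∀ i j, f i j ≤ C) (hfin : ⨆ i, (support (f i)).encard ≠ ⊤) :
    Tendsto (fun q : ℝ => ⨆ i, ∑' j, f i j ^ q) (𝓝[>] 0)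
      (𝓝 ((⨆ i, (support (f i)).encard).toNat : ℝ)) := by
  rcases isEmpty_or_nonempty ι with _ | _
  · simp
  obtain ⟨i₀, hi₀⟩ := ENat.exists_eq_iSup_of_lt_top hfin.lt_top
  set N := (⨆ i, (support (f i)).encard).toNat
  have hC : 0 < max C 1 := zero_lt_one.trans_le (le_max_right _ _)
  have hN : ∀ i, (support (f i)).encard ≤ N := fun i => by
    rw [ENat.natCast_toNat hfin]
    exact le_iSup (fun i => (support (f i)).encard) i
  have hrow_le : ∀ q : ℝ, 0 < q → ∀ i, ∑' j, f i j ^ q ≤ N * max C 1 ^ q := fun q hq i =>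
    tsum_rpow_le_mul_rpow (hf0 i) hC.le (fun j => (hfC i j).trans (le_max_left _ _))
      (hN i) hq
  have hlow : ∀ q : ℝ, 0 < q → ∑' j, f i₀ j ^ q ≤ ⨆ i, ∑' j, f i j ^ q := fun q hq =>
    le_ciSup ⟨_, Set.forall_mem_range.2 (hrow_le q hq)⟩ i₀
  have hup : ∀ q : ℝ, 0 < q → ⨆ i, ∑' j, f i j ^ q ≤ N * max C 1 ^ q := fun q hq =>
    Real.iSup_le (hrow_le q hq) (by positivity)
  have hrow : Tendsto (fun q : ℝ => ∑' j, f i₀ j ^ q) (𝓝[>] 0) (𝓝 N) := by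
    simpa only [Set.ncard_def, hi₀] using
      tendsto_tsum_rpow_nhdsGT_zero (Set.finite_of_encard_le_coe (hN i₀))
  exact tendsto_of_tendsto_of_tendsto_of_le_of_le' hrow
    (tendsto_const_mul_rpow_nhdsGT_zero _ hC.ne')
    (eventually_nhdsWithin_of_forall hlow) (eventually_nhdsWithin_of_forall hup)

end

theorem SqwPow_tendsto_S01_general {G : Type*} (A : G → G → ℂ) (w : G → G → ℝ)
    (hw : ∀ i j, 1 ≤ w i j) (hfin : S01 A ≠ ⊤)
    (hbdd : ∃ M : ℝ, ∀ i j, ‖A i j‖ * w i j ≤ M) :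
    Tendsto (fun q : ℝ => SqwPow q w A) (nhdsWithin 0 (Set.Ioi 0))
      (nhds ((S01 A).toNat : ℝ)) := by
  obtain ⟨M, hM⟩ := hbdd
  set a : G → G → ℝ := fun i j => ‖A i j‖ * w i j
  have ha0 : ∀ i j, 0 ≤ a i j := fun i j => mul_nonneg (norm_nonneg _) (zero_le_one.trans (hw i j))
  have ha_ne_zero : ∀ i j, a i j ≠ 0 ↔ A i j ≠ 0 := fun i j => by
    simp [a, (zero_lt_one.trans_le (hw i j)).ne']
  have hSqw : ∀ q, SqwPow q w A = max (⨆ i, ∑' j, a i j ^ q) (⨆ j, ∑' i, a i j ^ q) := fun q => by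
    simp only [SqwPow, a, Real.mul_rpow (norm_nonneg _) (zero_le_one.trans (hw _ _))]
  have hS01 : S01 A = max (⨆ i, (support (a i)).encard) (⨆ j, (support fun i => a i j).encard) := by
    simp only [S01, support, ha_ne_zero]
  rw [hS01] at hfin
  have hrows := ne_top_of_le_ne_top hfin le_sup_left
  have hcols := ne_top_of_le_ne_top hfin le_sup_right
  rw [hS01, ENat.toNat_max hrows hcols, Nat.cast_max, funext hSqw]
  exact (tendsto_iSup_tsum_rpow_nhdsGT_zero ha0 hM hrows).max
    (tendsto_iSup_tsum_rpow_nhdsGT_zero (fun j i => ha0 i j) (fun j i => hM i j) hcols)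

/-- For a matrix with finite S_{0,1}-measure and bounded weighted entries,
‖A‖_{S_{q,w}}^q → ‖A‖_{S_{0,1}} as q → 0⁺. -/
theorem SqwPow_tendsto_S01 {G : Type*} [Countable G] (A : G → G → ℂ) (w : G → G → ℝ)
    (hw : ∀ i j, 1 ≤ w i j) (hfin : S01 A ≠ ⊤)
    (hbdd : ∃ M : ℝ, ∀ i j, ‖A i j‖ * w i j ≤ M) :
    Tendsto (fun q : ℝ => SqwPow q w A) (nhdsWithin 0 (Set.Ioi 0))
      (nhds ((S01 A).toNat : ℝ)) :=
  SqwPow_tendsto_S01_general A w hw hfin hbdd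
end

section
/- For 0 < q ≤ 1 and a submultiplicative weight w ≥ 1 on G × G, the Schur-class quasi-norm is submultiplicative: ‖AB‖_{S_{q,w}} ≤ ‖A‖_{S_{q,w}} · ‖B‖_{S_{q,w}} for all matrices A, B with finite S_{q,w}-measure. -/
/-- The Gröchenig–Schur S_{q,w} quasi-norm. -/
noncomputable def SqwNorm {G : Type*} (q : ℝ) (w : G → G → ℝ) (A : G → G → ℂ) : ℝ :=
  SqwPow q w A ^ (1 / q)

/-- The matrix A has finite S_{q,w}-measure (summable rows/columns with
uniformly bounded weighted sums). -/
def FiniteSqw {G : Type*} (q : ℝ) (w : G → G → ℝ) (A : G → G → ℂ) : Prop :=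
  (∀ i : G, Summable fun j => ‖A i j‖ ^ q * w i j ^ q) ∧
  (∀ j : G, Summable fun i => ‖A i j‖ ^ q * w i j ^ q) ∧
  BddAbove (Set.range fun i : G => ∑' j : G, ‖A i j‖ ^ q * w i j ^ q) ∧
  BddAbove (Set.range fun j : G => ∑' i : G, ‖A i j‖ ^ q * w i j ^ q)

/-!
For `0 < q ≤ 1` the map `t ↦ t ^ q` is subadditive on `[0, ∞)`, so
`‖∑ₖ Aᵢₖ Bₖⱼ‖ ^ q ≤ ∑ₖ ‖Aᵢₖ‖ ^ q ‖Bₖⱼ‖ ^ q`. Together with `w(i,j) ^ q ≤ w(i,k) ^ q w(k,j) ^ q`, the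
weighted `q`-th powers of the entries of `AB` are dominated by the matrix product of those of `A`
and `B`, whose row sums are at most `(∑ₖ aᵢₖ) · supₖ ∑ⱼ bₖⱼ` by Tonelli. Columns are rows of the
transposes, taken with the transposed weight, which is again submultiplicative.
-/

open Function

namespace Real

variable {ι : Type*} {q : ℝ} {f : ι → ℝ}

theorem rpow_sum_le_sum_rpow (s : Finset ι) (hf : ∀ i ∈ s, 0 ≤ f i) (hq0 : 0 < q)
    (hq1 : q ≤ 1) : (∑ i ∈ s, f i) ^ q ≤ ∑ i ∈ s, f i ^ q := by
  classical
  induction s using Finset.induction_on with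
  | empty => simp [zero_rpow hq0.ne']
  | insert a s ha ih =>
    have hs : ∀ i ∈ s, 0 ≤ f i := fun i hi => hf i (Finset.mem_insert_of_mem hi)
    rw [Finset.sum_insert ha, Finset.sum_insert ha]
    calc (f a + ∑ i ∈ s, f i) ^ q ≤ f a ^ q + (∑ i ∈ s, f i) ^ q :=
          rpow_add_le_add_rpow (hf a (Finset.mem_insert_self a s)) (Finset.sum_nonneg hs)
            hq0.le hq1
      _ ≤ f a ^ q + ∑ i ∈ s, f i ^ q := add_le_add le_rfl (ih hs)

theorem sum_le_rpow_tsum_rpow (s : Finset ι) (hf : ∀ i, 0 ≤ f i)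
    (hfq : Summable fun i => f i ^ q) (hq0 : 0 < q) (hq1 : q ≤ 1) :
    ∑ i ∈ s, f i ≤ (∑' i, f i ^ q) ^ q⁻¹ := by
  rw [le_rpow_inv_iff_of_pos (Finset.sum_nonneg fun i _ => hf i)
    (tsum_nonneg fun i => rpow_nonneg (hf i) q) hq0]
  exact (rpow_sum_le_sum_rpow s (fun i _ => hf i) hq0 hq1).trans
    (hfq.sum_le_tsum s fun i _ => rpow_nonneg (hf i) q)

theorem summable_of_summable_rpow (hf : ∀ i, 0 ≤ f i) (hfq : Summable fun i => f i ^ q)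
    (hq0 : 0 < q) (hq1 : q ≤ 1) : Summable f :=
  summable_of_sum_le hf fun s => sum_le_rpow_tsum_rpow s hf hfq hq0 hq1

theorem rpow_tsum_le_tsum_rpow (hf : ∀ i, 0 ≤ f i) (hfq : Summable fun i => f i ^ q)
    (hq0 : 0 < q) (hq1 : q ≤ 1) : (∑' i, f i) ^ q ≤ ∑' i, f i ^ q := by
  have hS : 0 ≤ ∑' i, f i ^ q := tsum_nonneg fun i => rpow_nonneg (hf i) q
  rw [← le_rpow_inv_iff_of_pos (tsum_nonneg hf) hS hq0]
  exact tsum_le_of_sum_le' (rpow_nonneg hS _) fun s => sum_le_rpow_tsum_rpow s hf hfq hq0 hq1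

end Real

theorem norm_tsum_rpow_le_tsum_norm_rpow {ι E : Type*} [SeminormedAddCommGroup E] {q : ℝ}
    {z : ι → E} (hz : Summable fun i => ‖z i‖ ^ q) (hq0 : 0 < q) (hq1 : q ≤ 1) :
    ‖∑' i, z i‖ ^ q ≤ ∑' i, ‖z i‖ ^ q :=
  have hnorm : Summable fun i => ‖z i‖ :=
    Real.summable_of_summable_rpow (fun _ => norm_nonneg _) hz hq0 hq1
  (Real.rpow_le_rpow (norm_nonneg _) (norm_tsum_le_tsum_norm hnorm) hq0.le).trans
    (Real.rpow_tsum_le_tsum_rpow (fun _ => norm_nonneg _) hz hq0 hq1)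

section SchurTest

variable {ι κ : Type*} {a : ι → ℝ} {b : ι → κ → ℝ} {M : ℝ}

theorem summable_prod_mul_of_tsum_le (ha : ∀ k, 0 ≤ a k) (hb : ∀ k j, 0 ≤ b k j)
    (ha_sum : Summable a) (hb_sum : ∀ k, Summable (b k)) (hbM : ∀ k, ∑' j, b k j ≤ M) :
    Summable fun p : ι × κ => a p.1 * b p.1 p.2 := by
  refine (summable_prod_of_nonneg fun p => mul_nonneg (ha p.1) (hb p.1 p.2)).2
    ⟨fun k => (hb_sum k).mul_left (a k), (ha_sum.mul_right M).of_nonneg_of_le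
      (fun k => tsum_nonneg fun j => mul_nonneg (ha k) (hb k j)) fun k => ?_⟩
  exact tsum_mul_left.trans_le (mul_le_mul_of_nonneg_left (hbM k) (ha k))

theorem tsum_tsum_mul_le_tsum_mul (ha : ∀ k, 0 ≤ a k) (hb : ∀ k j, 0 ≤ b k j)
    (ha_sum : Summable a) (hb_sum : ∀ k, Summable (b k)) (hbM : ∀ k, ∑' j, b k j ≤ M) :
    ∑' j, ∑' k, a k * b k j ≤ (∑' k, a k) * M := by
  have hsummable := summable_prod_mul_of_tsum_le ha hb ha_sum hb_sum hbM
  calc ∑' j, ∑' k, a k * b k j = ∑' k, ∑' j, a k * b k j := hsummable.tsum_comm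
    _ ≤ ∑' k, a k * M :=
        hsummable.prod.tsum_le_tsum
          (fun k => tsum_mul_left.trans_le (mul_le_mul_of_nonneg_left (hbM k) (ha k)))
          (ha_sum.mul_right M)
    _ = (∑' k, a k) * M := tsum_mul_right

end SchurTest

section Schur

variable {G : Type*} {q : ℝ} {w : G → G → ℝ} {A B : G → G → ℂ}

noncomputable def SqwRowPow (q : ℝ) (w : G → G → ℝ) (A : G → G → ℂ) : ℝ :=
  ⨆ i : G, ∑' j : G, ‖A i j‖ ^ q * w i j ^ q

def RowFiniteSqw (q : ℝ) (w : G → G → ℝ) (A : G → G → ℂ) : Prop :=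
  (∀ i : G, Summable fun j => ‖A i j‖ ^ q * w i j ^ q) ∧
  BddAbove (Set.range fun i : G => ∑' j : G, ‖A i j‖ ^ q * w i j ^ q)

theorem SqwPow_eq_max_SqwRowPow (q : ℝ) (w : G → G → ℝ) (A : G → G → ℂ) :
    SqwPow q w A = max (SqwRowPow q w A) (SqwRowPow q (swap w) (swap A)) :=
  rfl

theorem FiniteSqw.rowFiniteSqw (h : FiniteSqw q w A) : RowFiniteSqw q w A :=
  ⟨h.1, h.2.2.1⟩

theorem FiniteSqw.rowFiniteSqw_swap (h : FiniteSqw q w A) :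
    RowFiniteSqw q (swap w) (swap A) :=
  ⟨h.2.1, h.2.2.2⟩

theorem norm_rpow_mul_rpow_nonneg (hw : ∀ i j, 0 ≤ w i j) (z : ℂ) (i j : G) :
    0 ≤ ‖z‖ ^ q * w i j ^ q :=
  mul_nonneg (Real.rpow_nonneg (norm_nonneg _) q) (Real.rpow_nonneg (hw i j) q)

theorem SqwRowPow_nonneg (hw : ∀ i j, 0 ≤ w i j) : 0 ≤ SqwRowPow q w A :=
  Real.iSup_nonneg fun i => tsum_nonneg fun j => norm_rpow_mul_rpow_nonneg hw _ i j

theorem SqwPow_nonneg (hw : ∀ i j, 0 ≤ w i j) : 0 ≤ SqwPow q w A :=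
  (SqwRowPow_nonneg hw).trans (le_max_left _ _)

theorem RowFiniteSqw.tsum_le (hA : RowFiniteSqw q w A) (i : G) :
    ∑' j, ‖A i j‖ ^ q * w i j ^ q ≤ SqwRowPow q w A :=
  le_ciSup hA.2 i

theorem norm_tsum_mul_rpow_mul_rpow_le (hq0 : 0 < q) (hq1 : q ≤ 1) (hw1 : ∀ i j, 1 ≤ w i j)
    (hwsub : ∀ i j k, w i j ≤ w i k * w k j) (i j : G)
    (hdom : Summable fun k => (‖A i k‖ ^ q * w i k ^ q) * (‖B k j‖ ^ q * w k j ^ q)) :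
    ‖∑' k, A i k * B k j‖ ^ q * w i j ^ q ≤
      ∑' k, (‖A i k‖ ^ q * w i k ^ q) * (‖B k j‖ ^ q * w k j ^ q) := by
  have hw0 : ∀ i j, 0 ≤ w i j := fun i j => zero_le_one.trans (hw1 i j)
  have hterm : ∀ k, ‖A i k * B k j‖ ^ q * w i j ^ q ≤
      (‖A i k‖ ^ q * w i k ^ q) * (‖B k j‖ ^ q * w k j ^ q) := by
    intro k
    have hw : w i j ^ q ≤ w i k ^ q * w k j ^ q := by
      rw [← Real.mul_rpow (hw0 i k) (hw0 k j)]
      exact Real.rpow_le_rpow (hw0 i j) (hwsub i j k) hq0.le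
    calc ‖A i k * B k j‖ ^ q * w i j ^ q = ‖A i k‖ ^ q * ‖B k j‖ ^ q * w i j ^ q := by
          rw [norm_mul, Real.mul_rpow (norm_nonneg _) (norm_nonneg _)]
      _ ≤ ‖A i k‖ ^ q * ‖B k j‖ ^ q * (w i k ^ q * w k j ^ q) := by gcongr
      _ = (‖A i k‖ ^ q * w i k ^ q) * (‖B k j‖ ^ q * w k j ^ q) := by ring
  have hnorm_nonneg : ∀ k, 0 ≤ ‖A i k * B k j‖ ^ q := fun k => Real.rpow_nonneg (norm_nonneg _) q
  have hweighted : Summable fun k => ‖A i k * B k j‖ ^ q * w i j ^ q :=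
    hdom.of_nonneg_of_le (fun k => mul_nonneg (hnorm_nonneg k) (Real.rpow_nonneg (hw0 i j) q))
      hterm
  have hunweighted : Summable fun k => ‖A i k * B k j‖ ^ q :=
    hweighted.of_nonneg_of_le hnorm_nonneg fun k =>
      le_mul_of_one_le_right (hnorm_nonneg k) (Real.one_le_rpow (hw1 i j) hq0.le)
  calc ‖∑' k, A i k * B k j‖ ^ q * w i j ^ q
      ≤ (∑' k, ‖A i k * B k j‖ ^ q) * w i j ^ q :=
        mul_le_mul_of_nonneg_right (norm_tsum_rpow_le_tsum_norm_rpow hunweighted hq0 hq1)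
          (Real.rpow_nonneg (hw0 i j) q)
    _ = ∑' k, ‖A i k * B k j‖ ^ q * w i j ^ q := tsum_mul_right.symm
    _ ≤ _ := hweighted.tsum_le_tsum hterm hdom

theorem SqwRowPow_mul_le (hq0 : 0 < q) (hq1 : q ≤ 1) (hw1 : ∀ i j, 1 ≤ w i j)
    (hwsub : ∀ i j k, w i j ≤ w i k * w k j) (hA : RowFiniteSqw q w A)
    (hB : RowFiniteSqw q w B) :
    SqwRowPow q w (fun i j => ∑' k, A i k * B k j) ≤ SqwRowPow q w A * SqwRowPow q w B := by
  have hw0 : ∀ i j, 0 ≤ w i j := fun i j => zero_le_one.trans (hw1 i j)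
  refine Real.iSup_le (fun i => ?_) (mul_nonneg (SqwRowPow_nonneg hw0) (SqwRowPow_nonneg hw0))
  have ha (k : G) := norm_rpow_mul_rpow_nonneg (q := q) hw0 (A i k) i k
  have hb (k j : G) := norm_rpow_mul_rpow_nonneg (q := q) hw0 (B k j) k j
  have hsummable : Summable fun p : G × G =>
      (‖A i p.1‖ ^ q * w i p.1 ^ q) * (‖B p.1 p.2‖ ^ q * w p.1 p.2 ^ q) :=
    summable_prod_mul_of_tsum_le ha hb (hA.1 i) hB.1 hB.tsum_le
  have hentry (j : G) := norm_tsum_mul_rpow_mul_rpow_le hq0 hq1 hw1 hwsub i j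
    (hsummable.prod_symm.prod_factor j)
  have hrow : Summable fun j => ∑' k, (‖A i k‖ ^ q * w i k ^ q) * (‖B k j‖ ^ q * w k j ^ q) :=
    hsummable.prod_symm.prod
  calc ∑' j, ‖∑' k, A i k * B k j‖ ^ q * w i j ^ q
      ≤ ∑' j, ∑' k, (‖A i k‖ ^ q * w i k ^ q) * (‖B k j‖ ^ q * w k j ^ q) :=
        (hrow.of_nonneg_of_le (fun j => norm_rpow_mul_rpow_nonneg hw0 _ i j) hentry).tsum_le_tsum
          hentry hrow
    _ ≤ (∑' k, ‖A i k‖ ^ q * w i k ^ q) * SqwRowPow q w B :=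
        tsum_tsum_mul_le_tsum_mul (a := fun k => ‖A i k‖ ^ q * w i k ^ q) ha hb (hA.1 i) hB.1
          hB.tsum_le
    _ ≤ SqwRowPow q w A * SqwRowPow q w B :=
        mul_le_mul_of_nonneg_right (hA.tsum_le i) (SqwRowPow_nonneg hw0)

theorem SqwPow_mul_le (hq0 : 0 < q) (hq1 : q ≤ 1) (hw1 : ∀ i j, 1 ≤ w i j)
    (hwsub : ∀ i j k, w i j ≤ w i k * w k j) (hA : FiniteSqw q w A) (hB : FiniteSqw q w B) :
    SqwPow q w (fun i j => ∑' k, A i k * B k j) ≤ SqwPow q w A * SqwPow q w B := by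
  have hw0 : ∀ i j, 0 ≤ w i j := fun i j => zero_le_one.trans (hw1 i j)
  have hswap : swap (fun i j => ∑' k, A i k * B k j) = fun i j => ∑' k, swap B i k * swap A k j :=
    funext fun i => funext fun j => tsum_congr fun k => mul_comm _ _
  have hrow := SqwRowPow_mul_le hq0 hq1 hw1 hwsub hA.rowFiniteSqw hB.rowFiniteSqw
  have hcol := SqwRowPow_mul_le hq0 hq1 (fun i j => hw1 j i)
    (fun i j k => (hwsub j i k).trans_eq (mul_comm _ _)) hB.rowFiniteSqw_swap hA.rowFiniteSqw_swap
  rw [← hswap] at hcol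
  simp only [SqwPow_eq_max_SqwRowPow]
  refine max_le (hrow.trans ?_) (hcol.trans ?_)
  · exact mul_le_mul (le_max_left _ _) (le_max_left _ _) (SqwRowPow_nonneg hw0)
      (SqwPow_nonneg hw0)
  · rw [mul_comm]
    exact mul_le_mul (le_max_right _ _) (le_max_right _ _) (SqwRowPow_nonneg fun i j => hw0 j i)
      (SqwPow_nonneg hw0)

end Schur

theorem SqwNorm_submultiplicative_general {G : Type*} (q : ℝ)
    (hq0 : 0 < q) (hq1 : q ≤ 1) (w : G → G → ℝ)
    (hw1 : ∀ i j, 1 ≤ w i j)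
    (hwsub : ∀ i j k, w i j ≤ w i k * w k j)
    (A B : G → G → ℂ) (hA : FiniteSqw q w A) (hB : FiniteSqw q w B) :
    SqwNorm q w (fun i j => ∑' k : G, A i k * B k j) ≤
      SqwNorm q w A * SqwNorm q w B := by
  have hw0 : ∀ i j, 0 ≤ w i j := fun i j => zero_le_one.trans (hw1 i j)
  calc SqwPow q w (fun i j => ∑' k : G, A i k * B k j) ^ (1 / q)
      ≤ (SqwPow q w A * SqwPow q w B) ^ (1 / q) :=
        Real.rpow_le_rpow (SqwPow_nonneg hw0) (SqwPow_mul_le hq0 hq1 hw1 hwsub hA hB)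
          (by positivity)
    _ = SqwPow q w A ^ (1 / q) * SqwPow q w B ^ (1 / q) :=
        Real.mul_rpow (SqwPow_nonneg hw0) (SqwPow_nonneg hw0)

/-- Submultiplicativity of the S_{q,w} quasi-norm for a submultiplicative weight. -/
theorem SqwNorm_submultiplicative {G : Type*} [Countable G] (q : ℝ)
    (hq0 : 0 < q) (hq1 : q ≤ 1) (w : G → G → ℝ)
    (hw1 : ∀ i j, 1 ≤ w i j) (hwsym : ∀ i j, w i j = w j i)
    (hwsub : ∀ i j k, w i j ≤ w i k * w k j)
    (A B : G → G → ℂ) (hA : FiniteSqw q w A) (hB : FiniteSqw q w B) :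
    SqwNorm q w (fun i j => ∑' k : G, A i k * B k j) ≤
      SqwNorm q w A * SqwNorm q w B :=
  SqwNorm_submultiplicative_general q hq0 hq1 w hw1 hwsub A B hA hB
end

section
/- Lyapunov equation via integral: if A ∈ B(H) satisfies ‖e^{tA}‖ ≤ E e^{-αt} for all t ≥ 0 (E, α > 0) and Q ∈ B(H) is self-adjoint and positive, then P = ∫_0^∞ e^{tA*} Q e^{tA} dt converges in B(H), is self-adjoint positive, and satisfies A*P + PA + Q = 0. -/
/-!
The integrand `f t = e^{tA*} Q e^{tA}` is bounded by `‖Q‖ E² e^{-2αt}`, hence integrable on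
`(0, ∞)` and vanishing at infinity. Each `f t` has the form `S* Q S`, so it is positive, and so is
its integral `P`. Since `f' = A* f + f A`, the fundamental theorem of calculus on `[0, ∞)` gives
`A* P + P A = f ∞ - f 0 = -Q`.
-/

open MeasureTheory ContinuousLinearMap Filter Set Asymptotics NormedSpace
open scoped Topology

section ExpDecay

variable {F : Type*} [NormedAddCommGroup F] {f : ℝ → F} {b : ℝ}

theorem integrableOn_Ioi_of_isBigO_exp_neg {a : ℝ} (hb : 0 < b) (hf : ContinuousOn f (Ici a))
    (ho : f =O[atTop] fun t => Real.exp (-b * t)) : IntegrableOn f (Ioi a) :=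
  integrableOn_Ici_iff_integrableOn_Ioi (by finiteness) |>.mp <|
    (hf.locallyIntegrableOn measurableSet_Ici).integrableOn_of_isBigO_atTop
      ho ⟨Ioi b, Ioi_mem_atTop b, exp_neg_integrableOn_Ioi b hb⟩

theorem tendsto_zero_of_isBigO_exp_neg (hb : 0 < b)
    (ho : f =O[atTop] fun t => Real.exp (-b * t)) : Tendsto f atTop (𝓝 0) :=
  ho.trans_tendsto <| Real.tendsto_exp_atBot.comp <|
    tendsto_id.const_mul_atTop_of_neg (neg_neg_iff_pos.2 hb)

end ExpDecay

section StarMul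

variable {R : Type*} [NonUnitalNormedRing R] [StarRing R] [NormedStarGroup R]

theorem norm_star_mul_mul_le (g Q : R) : ‖star g * Q * g‖ ≤ ‖Q‖ * ‖g‖ ^ 2 :=
  calc ‖star g * Q * g‖ ≤ ‖star g‖ * ‖Q‖ * ‖g‖ := norm_mul₃_le
    _ = ‖Q‖ * ‖g‖ ^ 2 := by rw [norm_star]; ring

theorem isBigO_star_mul_mul_of_norm_le_exp {g : ℝ → R} (Q : R) {E α : ℝ}
    (hg : ∀ t : ℝ, 0 ≤ t → ‖g t‖ ≤ E * Real.exp (-α * t)) :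
    (fun t => star (g t) * Q * g t) =O[atTop] fun t => Real.exp (-(2 * α) * t) := by
  refine .of_bound (‖Q‖ * E ^ 2) ?_
  filter_upwards [eventually_ge_atTop 0] with t ht
  calc ‖star (g t) * Q * g t‖ ≤ ‖Q‖ * ‖g t‖ ^ 2 := norm_star_mul_mul_le _ _
    _ ≤ ‖Q‖ * (E * Real.exp (-α * t)) ^ 2 := by gcongr; exact hg t ht
    _ = ‖Q‖ * E ^ 2 * ‖Real.exp (-(2 * α) * t)‖ := by
        rw [Real.norm_eq_abs, Real.abs_exp, mul_pow, ← Real.exp_nat_mul]; ring_nf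

end StarMul

theorem star_exp_smul {𝔸 : Type*} [NormedRing 𝔸] [NormedAlgebra ℝ 𝔸] [StarRing 𝔸]
    [ContinuousStar 𝔸] [StarModule ℝ 𝔸] (A : 𝔸) (t : ℝ) :
    star (exp (t • A)) = exp (t • star A) := by
  rw [star_exp, star_smul, star_trivial]

section Sylvester

variable {𝔸 : Type*} [NormedRing 𝔸] [NormedAlgebra ℝ 𝔸] [CompleteSpace 𝔸]

theorem hasDerivAt_exp_smul_mul_mul_exp_smul (A B Q : 𝔸) (t : ℝ) :
    HasDerivAt (fun s : ℝ => exp (s • B) * Q * exp (s • A))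
      (B * (exp (t • B) * Q * exp (t • A)) + exp (t • B) * Q * exp (t • A) * A) t :=
  (((hasDerivAt_exp_smul_const' B t).mul_const Q).mul
    (hasDerivAt_exp_smul_const A t)).congr_deriv (by simp only [mul_assoc])

theorem sylvester_integral (A B Q : 𝔸)
    (hint : IntegrableOn (fun t : ℝ => exp (t • B) * Q * exp (t • A)) (Ioi 0))
    (hlim : Tendsto (fun t : ℝ => exp (t • B) * Q * exp (t • A)) atTop (𝓝 0)) :
    B * (∫ t in Ioi (0 : ℝ), exp (t • B) * Q * exp (t • A)) +
      (∫ t in Ioi (0 : ℝ), exp (t • B) * Q * exp (t • A)) * A + Q = 0 := by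
  have hFTC := integral_Ioi_of_hasDerivAt_of_tendsto
    (hasDerivAt_exp_smul_mul_mul_exp_smul A B Q 0).continuousAt.continuousWithinAt
    (fun t _ => hasDerivAt_exp_smul_mul_mul_exp_smul A B Q t)
    ((hint.const_mul B).add (hint.mul_const A)) hlim
  rw [integral_add (hint.const_mul B) (hint.mul_const A), integral_const_mul_of_integrable hint,
    integral_mul_const_of_integrable hint] at hFTC
  simp [hFTC]

variable [StarRing 𝔸] [NormedStarGroup 𝔸] [StarModule ℝ 𝔸]

theorem lyapunov_integral_of_exp_stable {A : 𝔸} (Q : 𝔸) {E α : ℝ} (hα : 0 < α)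
    (hstab : ∀ t : ℝ, 0 ≤ t → ‖exp (t • A)‖ ≤ E * Real.exp (-α * t)) :
    IntegrableOn (fun t : ℝ => star (exp (t • A)) * Q * exp (t • A)) (Ioi 0) ∧
    star A * (∫ t in Ioi (0 : ℝ), star (exp (t • A)) * Q * exp (t • A)) +
      (∫ t in Ioi (0 : ℝ), star (exp (t • A)) * Q * exp (t • A)) * A + Q = 0 := by
  have hdecay := isBigO_star_mul_mul_of_norm_le_exp Q hstab
  simp_rw [star_exp_smul] at hdecay ⊢
  have hint := integrableOn_Ioi_of_isBigO_exp_neg (a := 0) (by positivity)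
    (fun t _ =>
      (hasDerivAt_exp_smul_mul_mul_exp_smul A (star A) Q t).continuousAt.continuousWithinAt)
    hdecay
  exact ⟨hint, sylvester_integral A (star A) Q hint
    (tendsto_zero_of_isBigO_exp_neg (by positivity) hdecay)⟩

end Sylvester

theorem isPositive_integral {X H : Type*} [MeasurableSpace X] {μ : Measure X}
    [NormedAddCommGroup H] [InnerProductSpace ℂ H] [CompleteSpace H] {f : X → H →L[ℂ] H}
    (hf : ∀ x, (f x).IsPositive) : (∫ x, f x ∂μ).IsPositive :=
  (nonneg_iff_isPositive _).mp <| integral_nonneg fun x => (nonneg_iff_isPositive _).mpr (hf x)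

theorem lyapunov_integral_general {H : Type*} [NormedAddCommGroup H]
    [InnerProductSpace ℂ H] [CompleteSpace H]
    (A Q : H →L[ℂ] H) (E α : ℝ) (hα : 0 < α)
    (hstab : ∀ t : ℝ, 0 ≤ t → ‖NormedSpace.exp (t • A)‖ ≤ E * Real.exp (-α * t))
    (hQ : Q.IsPositive) :
    IntegrableOn
      (fun t : ℝ => adjoint (NormedSpace.exp (t • A)) * Q * NormedSpace.exp (t • A))
      (Set.Ioi 0) ∧
    (∫ t in Set.Ioi (0 : ℝ),
        adjoint (NormedSpace.exp (t • A)) * Q * NormedSpace.exp (t • A)).IsPositive ∧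
    adjoint A * (∫ t in Set.Ioi (0 : ℝ),
        adjoint (NormedSpace.exp (t • A)) * Q * NormedSpace.exp (t • A)) +
      (∫ t in Set.Ioi (0 : ℝ),
        adjoint (NormedSpace.exp (t • A)) * Q * NormedSpace.exp (t • A)) * A +
      Q = 0 := by
  obtain ⟨hint, hsylvester⟩ := lyapunov_integral_of_exp_stable Q hα hstab
  exact ⟨hint, isPositive_integral fun t => hQ.adjoint_conj _, hsylvester⟩

/-- Lyapunov equation via the integral P = ∫₀^∞ e^{tA*} Q e^{tA} dt: for an
exponentially stable A and positive self-adjoint Q, the integral converges,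
is positive self-adjoint, and satisfies A*P + PA + Q = 0. -/
theorem lyapunov_integral {H : Type*} [NormedAddCommGroup H]
    [InnerProductSpace ℂ H] [CompleteSpace H]
    (A Q : H →L[ℂ] H) (E α : ℝ) (hE : 0 < E) (hα : 0 < α)
    (hstab : ∀ t : ℝ, 0 ≤ t → ‖NormedSpace.exp (t • A)‖ ≤ E * Real.exp (-α * t))
    (hQ : Q.IsPositive) :
    IntegrableOn
      (fun t : ℝ => adjoint (NormedSpace.exp (t • A)) * Q * NormedSpace.exp (t • A))
      (Set.Ioi 0) ∧
    (∫ t in Set.Ioi (0 : ℝ),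
        adjoint (NormedSpace.exp (t • A)) * Q * NormedSpace.exp (t • A)).IsPositive ∧
    adjoint A * (∫ t in Set.Ioi (0 : ℝ),
        adjoint (NormedSpace.exp (t • A)) * Q * NormedSpace.exp (t • A)) +
      (∫ t in Set.Ioi (0 : ℝ),
        adjoint (NormedSpace.exp (t • A)) * Q * NormedSpace.exp (t • A)) * A +
      Q = 0 :=
  lyapunov_integral_general A Q E α hα hstab hQ
end
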